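/- For all integers 1 ≤ p, q ≤ N, the symmetric tridiagonal matrix J(p,q) commutes with the periodic prolate matrix S(p,q): J(p,q) S(p,q) − S(p,q) J(p,q) = 0. -/

import Mathlib

open Matrix Complex

/-- The periodic prolate matrix `S(p,q) ∈ ℝ^{q×q}` with entries
`sin(pπ(j-k)/N)/sin(π(j-k)/N)` off the diagonal and `p` on the diagonal. -/
noncomputable def prolateS (N p q : ℕ) : Matrix (Fin q) (Fin q) ℝ :=
  fun j k => if j = k then (p : ℝ)
    else Real.sin ((p : ℝ) * Real.pi * (((j : ℕ) : ℝ) - ((k : ℕ) : ℝ)) / N) /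
         Real.sin (Real.pi * (((j : ℕ) : ℝ) - ((k : ℕ) : ℝ)) / N)

/-- The symmetric tridiagonal matrix `J(p,q) ∈ ℝ^{q×q}` with diagonal entries
`cos(π(2k-q-1)/N)·cos(pπ/N)` for 1-based `k` (0-based: `cos(π(2k+1-q)/N)·cos(pπ/N)`),
off-diagonal entries `[J]_{k,k+1} = [J]_{k+1,k} = -sin(πk/N)·sin(π(q-k)/N)` for
1-based `1 ≤ k ≤ q-1`, and all other entries zero. -/
noncomputable def tridiagJ (N p q : ℕ) : Matrix (Fin q) (Fin q) ℝ :=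
  fun j k =>
    if j = k then
      Real.cos (Real.pi * (2 * ((j : ℕ) : ℝ) + 1 - (q : ℝ)) / N) *
        Real.cos ((p : ℝ) * Real.pi / N)
    else if (j : ℕ) + 1 = (k : ℕ) ∨ (k : ℕ) + 1 = (j : ℕ) then
      -(Real.sin (Real.pi * ((min (j : ℕ) (k : ℕ) : ℝ) + 1) / N) *
        Real.sin (Real.pi * ((q : ℝ) - ((min (j : ℕ) (k : ℕ) : ℝ) + 1)) / N))
    else 0

/-! Both matrices are sections of operators on `ℤ`: `S(p,q)` is the Toeplitz matrix of the
kernel `s(d) = sin(pπd/N)/sin(πd/N)`, and `J(p,q)` is tridiagonal with diagonal `a` and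
off-diagonal `b`, where `b(x) = -sin(π(x+1)/N)·sin(π(q-x-1)/N)` vanishes at `x = -1` and
`x = q - 1`, so no boundary terms appear in either product. With `d = j - k`, the `(j,k)` entry
of `JS - SJ` is `(a_j - a_k)s(d) + (b_{j-1} - b_k)s(d-1) + (b_j - b_{k-1})s(d+1)`. By
product-to-sum formulas the three differences are `L = sin(π(j+k+1-q)/N)` times
`-2cos(pπ/N)sin(πd/N)`, `sin(π(d-1)/N)` and `sin(π(d+1)/N)`, so `sin(πd/N)s(d) = sin(pπd/N)`
turns the entry into `L·(sin(pπ(d-1)/N) + sin(pπ(d+1)/N) - 2cos(pπ/N)sin(pπd/N)) = 0`. -/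

section Tridiagonal

variable {R : Type*} {q : ℕ}

def tridiagMatrix [Zero R] (a b : ℤ → R) : Matrix (Fin q) (Fin q) R :=
  fun j k =>
    if j = k then a j
    else if (j : ℕ) + 1 = k ∨ (k : ℕ) + 1 = j then b (min (j : ℕ) (k : ℕ) : ℕ)
    else 0

def toeplitz (t : ℤ → R) : Matrix (Fin q) (Fin q) R :=
  fun j k => t (j - k)

lemma tridiagMatrix_transpose [Zero R] (a b : ℤ → R) :
    (tridiagMatrix a b : Matrix (Fin q) (Fin q) R)ᵀ = tridiagMatrix a b := by
  ext j k
  simp only [transpose_apply, tridiagMatrix, eq_comm (a := k), or_comm, min_comm]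
  split_ifs with h <;> simp [h]

lemma toeplitz_transpose (t : ℤ → R) :
    (toeplitz t : Matrix (Fin q) (Fin q) R)ᵀ = toeplitz (fun d => t (-d)) := by
  ext j k
  simp [toeplitz]

lemma tridiagMatrix_apply [AddMonoid R] (a b : ℤ → R) (j m : Fin q) :
    (tridiagMatrix a b : Matrix (Fin q) (Fin q) R) j m =
      (if (m : ℤ) = j then a j else 0) + (if (m : ℤ) = j - 1 then b (j - 1) else 0) +
        (if (m : ℤ) = j + 1 then b j else 0) := by
  simp only [tridiagMatrix, Fin.ext_iff]
  split_ifs <;> first | omega | simp <;> congr 1 <;> omega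

lemma Fin.sum_ite_intCast_eq [AddCommMonoid R] (c : ℤ) (g : ℤ → R) :
    ∑ m : Fin q, (if (m : ℤ) = c then g m else 0) = if 0 ≤ c ∧ c < q then g c else 0 := by
  split_ifs with hc
  · lift c to ℕ using hc.1
    rw [Finset.sum_eq_single ⟨c, by omega⟩
      (fun m _ hm => if_neg (by simpa [Fin.ext_iff] using hm)) (by simp)]
    simp
  · exact Finset.sum_eq_zero fun m _ => if_neg (by omega)

lemma tridiagMatrix_mul_toeplitz_apply [Semiring R] (a b t : ℤ → R)
    (hb₀ : b (-1) = 0) (hbq : b (q - 1) = 0) (j k : Fin q) :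
    (tridiagMatrix a b * toeplitz t : Matrix (Fin q) (Fin q) R) j k =
      a j * t (j - k) + b (j - 1) * t (j - k - 1) + b j * t (j - k + 1) := by
  simp only [mul_apply, tridiagMatrix_apply, toeplitz, add_mul, ite_mul, zero_mul,
    Finset.sum_add_distrib]
  rw [Fin.sum_ite_intCast_eq _ (fun m => a j * t (m - k)),
    Fin.sum_ite_intCast_eq _ (fun m => b (j - 1) * t (m - k)),
    Fin.sum_ite_intCast_eq _ (fun m => b j * t (m - k)), if_pos (by omega)]
  congr 2
  · split_ifs with h
    · ring_nf
    · obtain h : (j : ℤ) = 0 := by omega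
      simp [h, hb₀]
  · split_ifs with h
    · ring_nf
    · obtain h : (j : ℤ) = q - 1 := by omega
      simp [h, hbq]

lemma toeplitz_mul_tridiagMatrix_apply [CommSemiring R] (a b t : ℤ → R)
    (hb₀ : b (-1) = 0) (hbq : b (q - 1) = 0) (j k : Fin q) :
    (toeplitz t * tridiagMatrix a b : Matrix (Fin q) (Fin q) R) j k =
      t (j - k) * a k + t (j - k + 1) * b (k - 1) + t (j - k - 1) * b k := by
  rw [← transpose_apply (toeplitz t * _), transpose_mul, tridiagMatrix_transpose,
    toeplitz_transpose, tridiagMatrix_mul_toeplitz_apply a b _ hb₀ hbq]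
  simp only [neg_sub, mul_comm (t _)]
  ring_nf

end Tridiagonal

noncomputable def jacobiDiag (θ ω Q : ℝ) (x : ℤ) : ℝ :=
  Real.cos (θ * (2 * x + 1 - Q)) * Real.cos ω

noncomputable def jacobiOffDiag (θ Q : ℝ) (x : ℤ) : ℝ :=
  -(Real.sin (θ * (x + 1)) * Real.sin (θ * (Q - (x + 1))))

lemma jacobiDiag_sub (θ ω Q : ℝ) (x y : ℤ) :
    jacobiDiag θ ω Q x - jacobiDiag θ ω Q y =
      -2 * Real.cos ω * Real.sin (θ * (x + y + 1 - Q)) * Real.sin (θ * (x - y)) := by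
  rw [jacobiDiag, jacobiDiag, ← sub_mul, Real.cos_sub_cos]
  ring_nf

lemma jacobiOffDiag_sub (θ Q : ℝ) (x y : ℤ) :
    jacobiOffDiag θ Q (x - 1) - jacobiOffDiag θ Q y =
      Real.sin (θ * (x + y + 1 - Q)) * Real.sin (θ * (x - y - 1)) := by
  have hx := Real.two_mul_sin_mul_sin (θ * x) (θ * (Q - x))
  have hy := Real.two_mul_sin_mul_sin (θ * (y + 1)) (θ * (Q - (y + 1)))
  have hxy := Real.cos_sub_cos (θ * (2 * y + 2 - Q)) (θ * (2 * x - Q))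
  have hneg := Real.sin_neg (θ * (x - y - 1))
  simp only [jacobiOffDiag, Int.cast_sub, Int.cast_one, sub_add_cancel]
  linear_combination (norm := ring_nf)
    (-hx + hy + hxy) / 2 - Real.sin (θ * (x + y + 1 - Q)) * hneg

lemma jacobiOffDiag_neg_one (θ Q : ℝ) : jacobiOffDiag θ Q (-1) = 0 := by
  simp [jacobiOffDiag]

lemma jacobiOffDiag_natCast_sub_one (θ : ℝ) (q : ℕ) : jacobiOffDiag θ q (q - 1) = 0 := by
  simp [jacobiOffDiag]

lemma jacobi_toeplitz_commute_apply (θ ω Q : ℝ) (s : ℤ → ℝ)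
    (hs : ∀ d : ℤ, Real.sin (θ * d) * s d = Real.sin (ω * d)) (x y : ℤ) :
    jacobiDiag θ ω Q x * s (x - y) + jacobiOffDiag θ Q (x - 1) * s (x - y - 1) +
        jacobiOffDiag θ Q x * s (x - y + 1) =
      s (x - y) * jacobiDiag θ ω Q y + s (x - y + 1) * jacobiOffDiag θ Q (y - 1) +
        s (x - y - 1) * jacobiOffDiag θ Q y := by
  have hdiag := jacobiDiag_sub θ ω Q x y
  have hoff := jacobiOffDiag_sub θ Q x y
  have hoff' := jacobiOffDiag_sub θ Q (x + 1) (y - 1)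
  have hs₀ := hs (x - y)
  have hsPrev := hs (x - y - 1)
  have hsNext := hs (x - y + 1)
  have hsub := Real.sin_sub (ω * (x - y)) ω
  have hadd := Real.sin_add (ω * (x - y)) ω
  push_cast at hoff' hs₀ hsPrev hsNext
  rw [add_sub_cancel_right] at hoff'
  linear_combination (norm := ring_nf) s (x - y) * hdiag + s (x - y - 1) * hoff +
    s (x - y + 1) * hoff' + Real.sin (θ * (x + y + 1 - Q)) *
      (hsPrev + hsNext - 2 * Real.cos ω * hs₀ + hsub + hadd)

lemma sin_natCast_mul_eq_zero {x : ℝ} (hx : Real.sin x = 0) (p : ℕ) : Real.sin (p * x) = 0 := by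
  obtain ⟨n, rfl⟩ := Real.sin_eq_zero_iff.1 hx
  simpa [mul_assoc] using Real.sin_int_mul_pi (p * n)

noncomputable def prolateKernel (N p : ℕ) (d : ℤ) : ℝ :=
  if d = 0 then p else Real.sin (p * Real.pi * d / N) / Real.sin (Real.pi * d / N)

lemma sin_mul_prolateKernel (N p : ℕ) (d : ℤ) :
    Real.sin (Real.pi / N * d) * prolateKernel N p d = Real.sin (p * (Real.pi / N) * d) := by
  have hθ : Real.pi / N * d = Real.pi * d / N := by ring
  have hω : p * (Real.pi / N) * d = p * (Real.pi * d / N) := by ring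
  rw [hθ, hω, prolateKernel]
  split_ifs with hd
  · simp [hd]
  · by_cases hs : Real.sin (Real.pi * d / N) = 0
    -- Where the quotient is junk (`x / 0 = 0`), `sin (p * x)` vanishes along with `sin x`.
    · rw [hs, zero_mul, sin_natCast_mul_eq_zero hs]
    · rw [mul_div_cancel₀ _ hs]
      ring_nf

lemma prolateS_eq_toeplitz (N p q : ℕ) : prolateS N p q = toeplitz (prolateKernel N p) := by
  ext j k
  simp only [prolateS, toeplitz, prolateKernel, sub_eq_zero, Int.cast_sub, Int.cast_natCast,
    Nat.cast_inj, Fin.ext_iff]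

lemma tridiagJ_eq_tridiagMatrix (N p q : ℕ) :
    tridiagJ N p q =
      tridiagMatrix (jacobiDiag (Real.pi / N) (p * (Real.pi / N)) q)
        (jacobiOffDiag (Real.pi / N) q) := by
  ext j k
  simp only [tridiagJ, tridiagMatrix, jacobiDiag, jacobiOffDiag]
  push_cast
  split_ifs <;> ring_nf

theorem tridiagJ_commutes_with_prolateS_general (N p q : ℕ) :
    tridiagJ N p q * prolateS N p q - prolateS N p q * tridiagJ N p q = 0 := by
  have hb₀ := jacobiOffDiag_neg_one (Real.pi / N) q
  have hbq := jacobiOffDiag_natCast_sub_one (Real.pi / N) q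
  ext j k
  rw [Matrix.sub_apply, Matrix.zero_apply, sub_eq_zero, tridiagJ_eq_tridiagMatrix,
    prolateS_eq_toeplitz, tridiagMatrix_mul_toeplitz_apply _ _ _ hb₀ hbq,
    toeplitz_mul_tridiagMatrix_apply _ _ _ hb₀ hbq]
  exact jacobi_toeplitz_commute_apply _ _ _ _ (sin_mul_prolateKernel N p) j k

theorem tridiagJ_commutes_with_prolateS
    (N p q : ℕ) (hN : 0 < N) (hp1 : 1 ≤ p) (hpN : p ≤ N) (hq1 : 1 ≤ q) (hqN : q ≤ N) :
    tridiagJ N p q * prolateS N p q - prolateS N p q * tridiagJ N p q = 0 :=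
  tridiagJ_commutes_with_prolateS_general N p q
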